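/- Let k > 2 and let m be an odd composite natural number (m > 1 and m not prime) that is not divisible by 3, with H(m) = k. Then m < 2·3^{k−2} + 1. -/

import Mathlib

/-- The height function: H(1) = 0 and H(n) = H(φ(n)) + 1 for n ≥ 2. -/
def H : ℕ → ℕ
  | 0 => 0
  | 1 => 0
  | n + 2 => H (Nat.totient (n + 2)) + 1
  decreasing_by exact Nat.totient_lt _ (by omega)

/-- The sum-of-heights function S(n) = ∑_{k=1}^n H(k). -/
def S (n : ℕ) : ℕ := ∑ k ∈ Finset.Icc 1 n, H k

/-!
Let `C` be Shapiro's class function `shapiroClass`: the completely additive function with `C 2 = 1`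
and `C p = H (p - 1)` for odd primes `p`. Since `φ (p ^ e) = p ^ (e - 1) * (p - 1)`, applying `φ` trades
each odd prime factor `p` for `p - 1`, of the same class once `H = C` is known on even numbers, and
lowers the exponent of `2` by one. Strong induction thus gives `H n = C n` for even `n` and
`H n = C n + 1` for odd `n > 1`.

The bounds `n ≤ 3 ^ C n`, and `3 n ≤ 2 * 3 ^ C n` for even `n`, are stable under products and pass
from `p - 1` to an odd prime `p`. Hence a prime `p ≥ 5` has `C p ≥ 2` and `3 p ≤ 2 * 3 ^ C p + 3`;
these two properties are again stable under products, and for `m = a b` with `a, b > 1` prime to `6`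
they give `3 m ≤ 2 * 3 ^ C m = 2 * 3 ^ (H m - 1)`.
-/

open Nat

lemma H_one : H 1 = 0 := by simp [H]

lemma H_eq_H_totient_add_one {n : ℕ} (hn : 2 ≤ n) : H n = H (φ n) + 1 := by
  obtain ⟨m, rfl⟩ : ∃ m, n = m + 2 := ⟨n - 2, by omega⟩
  simp [H]

lemma two_le_H {n : ℕ} (hn : 3 ≤ n) : 2 ≤ H n := by
  have hφ : 2 ≤ φ n := by
    obtain ⟨r, hr⟩ := totient_even (by omega : 2 < n)
    have := totient_pos.mpr (by omega : 0 < n)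
    omega
  rw [H_eq_H_totient_add_one (by omega), H_eq_H_totient_add_one hφ]
  omega

def primeClass (p : ℕ) : ℕ := if p = 2 then 1 else H (p - 1)

def shapiroClass (n : ℕ) : ℕ := n.factorization.sum fun p e => e * primeClass p

lemma primeClass_of_ne_two {p : ℕ} (hp : p ≠ 2) : primeClass p = H (p - 1) := if_neg hp

lemma two_le_primeClass {p : ℕ} (hp : 4 ≤ p) : 2 ≤ primeClass p := by
  rw [primeClass_of_ne_two (by omega)]
  exact two_le_H (by omega)

lemma one_le_primeClass {p : ℕ} (hp : p.Prime) : 1 ≤ primeClass p := by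
  rcases eq_or_ne p 2 with rfl | hp2
  · simp [primeClass]
  · rw [primeClass_of_ne_two hp2, H_eq_H_totient_add_one (by have := hp.two_le; omega)]
    omega

@[simp] lemma shapiroClass_zero : shapiroClass 0 = 0 := by simp [shapiroClass]

@[simp] lemma shapiroClass_one : shapiroClass 1 = 0 := by simp [shapiroClass]

lemma shapiroClass_mul {a b : ℕ} (ha : a ≠ 0) (hb : b ≠ 0) :
    shapiroClass (a * b) = shapiroClass a + shapiroClass b := by
  unfold shapiroClass
  rw [Nat.factorization_mul ha hb]
  exact Finsupp.sum_add_index' (fun _ => zero_mul _) (fun _ _ _ => add_mul _ _ _)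

lemma shapiroClass_prod {ι : Type*} (s : Finset ι) (f : ι → ℕ) (hf : ∀ i ∈ s, f i ≠ 0) :
    shapiroClass (∏ i ∈ s, f i) = ∑ i ∈ s, shapiroClass (f i) := by
  unfold shapiroClass
  rw [factorization_prod hf]
  exact (Finsupp.sum_finsetSum_index (fun _ => zero_mul _) (fun _ _ _ => add_mul _ _ _)).symm

lemma shapiroClass_prime_pow {p : ℕ} (hp : p.Prime) (e : ℕ) :
    shapiroClass (p ^ e) = e * primeClass p := by
  unfold shapiroClass
  rw [hp.factorization_pow, Finsupp.sum_single_index (zero_mul _)]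

lemma shapiroClass_prime {p : ℕ} (hp : p.Prime) : shapiroClass p = primeClass p := by
  simpa using shapiroClass_prime_pow hp 1

lemma shapiroClass_totient_prime_pow_add {p e : ℕ} (hp : p.Prime) (he : e ≠ 0)
    (hw : p ≠ 2 → shapiroClass (p - 1) = primeClass p) :
    shapiroClass (φ (p ^ e)) + (if p = 2 then 1 else 0) = e * primeClass p := by
  obtain ⟨e, rfl⟩ := exists_eq_add_one.2 (Nat.pos_of_ne_zero he)
  rw [totient_prime_pow hp (by omega), add_tsub_cancel_right,
    shapiroClass_mul (pow_ne_zero _ hp.ne_zero) (by have := hp.two_le; omega),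
    shapiroClass_prime_pow hp]
  rcases eq_or_ne p 2 with rfl | hp2
  · simp [primeClass]
  · rw [hw hp2, if_neg hp2]
    ring

lemma shapiroClass_totient_add {n : ℕ} (hn : n ≠ 0)
    (hw : ∀ p ∈ n.primeFactors, p ≠ 2 → shapiroClass (p - 1) = primeClass p) :
    shapiroClass (φ n) + (if 2 ∣ n then 1 else 0) = shapiroClass n := by
  rw [multiplicative_factorization φ (@totient_mul) totient_one hn, Finsupp.prod,
    shapiroClass_prod _ _ fun p hp => (totient_pos.2 (pow_pos (prime_of_mem_primeFactors
      (support_factorization n ▸ hp)).pos _)).ne', support_factorization]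
  have hdvd : (if 2 ∣ n then 1 else 0) = ∑ p ∈ n.primeFactors, if p = 2 then 1 else 0 := by
    simp [Finset.sum_ite_eq', hn, prime_two]
  calc _ = ∑ p ∈ n.primeFactors,
          (shapiroClass (φ (p ^ n.factorization p)) + if p = 2 then 1 else 0) := by
        rw [hdvd, Finset.sum_add_distrib]
    _ = shapiroClass n := Finset.sum_congr rfl fun p hp =>
        shapiroClass_totient_prime_pow_add (prime_of_mem_primeFactors hp)
          (Finsupp.mem_support_iff.1 (support_factorization n ▸ hp)) (hw p hp)

lemma H_eq_shapiroClass_of_even {n : ℕ} (hn : Even n) : H n = shapiroClass n := by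
  induction n using Nat.strong_induction_on with
  | _ n ih =>
  rcases eq_or_ne n 0 with rfl | hn0
  · simp [H]
  have h2 : 2 ≤ n := by obtain ⟨r, rfl⟩ := hn; omega
  have hφ : H (φ n) = shapiroClass (φ n) := by
    rcases h2.eq_or_lt with rfl | h2
    · simp [H_one]
    · exact ih _ (totient_lt n (by omega)) (totient_even h2)
  have hw : ∀ p ∈ n.primeFactors, p ≠ 2 → shapiroClass (p - 1) = primeClass p := by
    intro p hp hp2
    have hp' := prime_of_mem_primeFactors hp
    rw [primeClass_of_ne_two hp2,
      ih _ (by have := le_of_mem_primeFactors hp; have := hp'.two_le; omega)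
        (Nat.Odd.sub_odd (hp'.odd_of_ne_two hp2) odd_one)]
  have key := shapiroClass_totient_add hn0 hw
  rw [if_pos hn.two_dvd] at key
  rw [H_eq_H_totient_add_one h2, hφ, key]

lemma shapiroClass_sub_one_of_prime {p : ℕ} (hp : p.Prime) (hp2 : p ≠ 2) :
    shapiroClass (p - 1) = primeClass p := by
  rw [primeClass_of_ne_two hp2,
    H_eq_shapiroClass_of_even (Nat.Odd.sub_odd (hp.odd_of_ne_two hp2) odd_one)]

lemma H_eq_shapiroClass_add_one_of_odd {n : ℕ} (hn : Odd n) (h1 : 1 < n) :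
    H n = shapiroClass n + 1 := by
  have key := shapiroClass_totient_add hn.pos.ne'
    (fun p hp hp2 => shapiroClass_sub_one_of_prime (prime_of_mem_primeFactors hp) hp2)
  rw [if_neg (by simpa [← even_iff_two_dvd] using hn)] at key
  have h2 : 2 < n := by obtain ⟨r, rfl⟩ := hn; omega
  rw [H_eq_H_totient_add_one h2.le, H_eq_shapiroClass_of_even (totient_even h2), ← key]

lemma exists_mul_eq_of_not_prime {n : ℕ} (hn : 2 ≤ n) (hp : ¬n.Prime) :
    ∃ a b, 2 ≤ a ∧ 2 ≤ b ∧ a * b = n := by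
  obtain ⟨a, ⟨b, rfl⟩, ha, hab⟩ := exists_dvd_of_not_prime2 hn hp
  refine ⟨a, b, ha, ?_, rfl⟩
  rcases b with _ | _ | b <;> simp_all

lemma prime_composite_strong_induction {P : ℕ → Prop} (one : P 1)
    (prime : ∀ p, p.Prime → (∀ m, m ≠ 0 → m < p → P m) → P p)
    (composite : ∀ a, 2 ≤ a → P a → ∀ b, 2 ≤ b → P b → P (a * b)) {n : ℕ} (hn : n ≠ 0) :
    P n := by
  induction n using Nat.strong_induction_on with
  | _ n ih =>
  rcases eq_or_ne n 1 with rfl | hn1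
  · exact one
  by_cases hp : n.Prime
  · exact prime n hp fun m hm hmn => ih m hmn hm
  obtain ⟨a, b, ha, hb, rfl⟩ := exists_mul_eq_of_not_prime (by omega) hp
  exact composite a ha (ih a (lt_mul_of_one_lt_right (by omega) hb) (by omega))
    b hb (ih b (lt_mul_of_one_lt_left (by omega) ha) (by omega))

lemma le_three_pow_shapiroClass_and_of_even {n : ℕ} (hn : n ≠ 0) :
    n ≤ 3 ^ shapiroClass n ∧ (Even n → 3 * n ≤ 2 * 3 ^ shapiroClass n) := by
  refine prime_composite_strong_induction (P := fun n => n ≤ 3 ^ shapiroClass n ∧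
    (Even n → 3 * n ≤ 2 * 3 ^ shapiroClass n)) ?one ?prime ?composite hn
  case one => simp
  case prime =>
    intro p hp ih
    rcases eq_or_ne p 2 with rfl | hp2
    · simp [shapiroClass_prime prime_two, primeClass]
    have hodd := hp.odd_of_ne_two hp2
    have hclass : shapiroClass p = shapiroClass (p - 1) := by
      rw [shapiroClass_prime hp, shapiroClass_sub_one_of_prime hp hp2]
    have := hp.two_le
    have hsub := (ih (p - 1) (by omega) (by omega)).2 (Nat.Odd.sub_odd hodd odd_one)
    have hpow : 3 ≤ 3 ^ shapiroClass p := by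
      rw [shapiroClass_prime hp]
      exact le_self_pow₀ (by norm_num) (Nat.one_le_iff_ne_zero.1 (one_le_primeClass hp))
    rw [hclass] at hpow ⊢
    exact ⟨by omega, fun heven => absurd heven (not_even_iff_odd.2 hodd)⟩
  case composite =>
    intro a ha iha b hb ihb
    rw [shapiroClass_mul (by omega) (by omega), pow_add]
    refine ⟨Nat.mul_le_mul iha.1 ihb.1, fun hab => ?_⟩
    rcases even_mul.1 hab with h | h
    · calc 3 * (a * b) = 3 * a * b := by ring
        _ ≤ 2 * 3 ^ shapiroClass a * 3 ^ shapiroClass b := Nat.mul_le_mul (iha.2 h) ihb.1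
        _ = _ := by ring
    · calc 3 * (a * b) = a * (3 * b) := by ring
        _ ≤ 3 ^ shapiroClass a * (2 * 3 ^ shapiroClass b) := Nat.mul_le_mul iha.1 (ihb.2 h)
        _ = _ := by ring

lemma three_mul_le_of_even {n : ℕ} (hn : Even n) : 3 * n ≤ 2 * 3 ^ shapiroClass n := by
  rcases eq_or_ne n 0 with rfl | hn0
  · simp
  · exact (le_three_pow_shapiroClass_and_of_even hn0).2 hn

lemma three_mul_mul_le_of_le {a b x y : ℕ} (ha : 3 * a ≤ 2 * 3 ^ x + 3)
    (hb : 3 * b ≤ 2 * 3 ^ y + 3) (hx : 2 ≤ x) (hy : 2 ≤ y) : 3 * (a * b) ≤ 2 * 3 ^ (x + y) := by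
  have hX : 9 ≤ 3 ^ x := by simpa using Nat.pow_le_pow_right (by norm_num : 0 < 3) hx
  have hY : 9 ≤ 3 ^ y := by simpa using Nat.pow_le_pow_right (by norm_num : 0 < 3) hy
  rw [pow_add]
  nlinarith [Nat.mul_le_mul ha hb]

lemma three_mul_le_and_two_le_shapiroClass {r : ℕ} (hr : 2 ≤ r) (h2 : Odd r) (h3 : ¬3 ∣ r) :
    3 * r ≤ 2 * 3 ^ shapiroClass r + 3 ∧ 2 ≤ shapiroClass r := by
  induction r using prime_composite_induction with
  | zero => omega
  | one => omega
  | prime p hp =>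
    have hp5 : 5 ≤ p := by
      obtain ⟨r, rfl⟩ := h2
      have : r ≠ 1 := by rintro rfl; exact h3 (dvd_refl 3)
      have := hp.two_le
      omega
    have hsub := three_mul_le_of_even (Nat.Odd.sub_odd h2 odd_one)
    rw [shapiroClass_sub_one_of_prime hp (by omega), ← shapiroClass_prime hp] at hsub
    exact ⟨by omega, shapiroClass_prime hp ▸ two_le_primeClass (by omega)⟩
  | composite a ha iha b hb ihb =>
    obtain ⟨ha2, hb2⟩ := Nat.odd_mul.1 h2
    obtain ⟨hA, hgA⟩ := iha ha ha2 fun h => h3 (h.mul_right b)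
    obtain ⟨hB, hgB⟩ := ihb hb hb2 fun h => h3 (h.mul_left a)
    rw [shapiroClass_mul (by omega) (by omega)]
    exact ⟨(three_mul_mul_le_of_le hA hB hgA hgB).trans (Nat.le_add_right _ _), by omega⟩

theorem bound_for_odd_composite_general (k m : ℕ) (hm : 1 < m)
    (hodd : Odd m) (hcomp : ¬ m.Prime) (h3 : ¬ (3 ∣ m)) (hH : H m = k) :
    m < 2 * 3 ^ (k - 2) + 1 := by
  rw [← hH, H_eq_shapiroClass_add_one_of_odd hodd hm]
  obtain ⟨a, b, ha, hb, rfl⟩ := exists_mul_eq_of_not_prime hm hcomp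
  obtain ⟨ha2, hb2⟩ := Nat.odd_mul.1 hodd
  obtain ⟨hA, hgA⟩ := three_mul_le_and_two_le_shapiroClass ha ha2 fun h => h3 (h.mul_right b)
  obtain ⟨hB, hgB⟩ := three_mul_le_and_two_le_shapiroClass hb hb2 fun h => h3 (h.mul_left a)
  have hab := three_mul_mul_le_of_le hA hB hgA hgB
  have hexp : shapiroClass (a * b) + 1 - 2 + 1 = shapiroClass a + shapiroClass b := by
    rw [shapiroClass_mul (by omega) (by omega)]
    omega
  rw [← hexp, pow_succ] at hab
  omega

theorem bound_for_odd_composite (k m : ℕ) (hk : 2 < k) (hm : 1 < m)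
    (hodd : Odd m) (hcomp : ¬ m.Prime) (h3 : ¬ (3 ∣ m)) (hH : H m = k) :
    m < 2 * 3 ^ (k - 2) + 1 :=
  bound_for_odd_composite_general k m hm hodd hcomp h3 hH
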